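/- Let a and b be keys and consider the configuration whose root is a test node on b (equal-to test ⟨= b⟩ or less-than test ⟨< b⟩) routing to destination X on the =/≥-outcome, and whose ≠/<-branch leads to ⟨< a⟩ with <-outcome routing to destination Y and ≥-outcome routing to destination Z. If a < b, or if the test on b is an equal-to test, then the configuration can be validly rotated so that ⟨< a⟩ becomes the root: namely, the test on b is placed on the branch of ⟨< a⟩ whose range contains b (with its =/≥-outcome routing to X and its ≠/<-outcome routing to Y if b < a, respectively to Z if b ≥ a), the other branch of ⟨< a⟩ routing directly to Y (if b ≥ a), respectively Z (if b < a); the rotated configuration routes every query q ∈ K to the same destination among {X, Y, Z} as the original configuration. -/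

import Mathlib

/-!
If `b < a`, the test on `b` is an equal-to test, and its `=`-outcome `q = b` forces `q < a`,
so the test can be pushed into the `<`-branch of `⟨< a⟩`. If `b ≥ a`, the `=/≥`-outcome of
either kind of test forces `q ≥ b ≥ a`, so the two tests exclude each other and commute.
-/

/-- Binary search trees with two-way comparisons (2WCST):
leaves are labelled by keys, internal nodes are equal-to tests `eqNode k yes no`
or less-than tests `ltNode k yes no` (yes-branch taken when `q = k`, resp. `q < k`). -/
inductive CTree where
  | leaf : ℕ → CTree
  | eqNode : ℕ → CTree → CTree → CTree
  | ltNode : ℕ → CTree → CTree → CTree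
deriving DecidableEq

namespace CTree

/-- The key labelling the leaf reached by query `q`. -/
def search : CTree → ℕ → ℕ
  | leaf k, _ => k
  | eqNode k y nb, q => if q = k then y.search q else nb.search q
  | ltNode k y nb, q => if q < k then y.search q else nb.search q

/-- The depth of the leaf reached by query `q`. -/
def searchDepth : CTree → ℕ → ℕ
  | leaf _, _ => 0
  | eqNode k y nb, q => (if q = k then y.searchDepth q else nb.searchDepth q) + 1
  | ltNode k y nb, q => (if q < k then y.searchDepth q else nb.searchDepth q) + 1

/-- All keys appearing in the tree (leaf labels and test keys). -/
def keys : CTree → Finset ℕ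
  | leaf k => {k}
  | eqNode k y nb => insert k (y.keys ∪ nb.keys)
  | ltNode k y nb => insert k (y.keys ∪ nb.keys)

/-- `T` is a valid 2WCST for the instance with key set `K = {1, …, n}`:
all keys used belong to `K` and every query `q ∈ K` reaches a leaf labelled `q`. -/
def ValidFor (n : ℕ) (T : CTree) : Prop :=
  T.keys ⊆ Finset.Icc 1 n ∧ ∀ q ∈ Finset.Icc 1 n, T.search q = q

/-- The cost of `T`: `∑_{k ∈ K} w_k · depth_T(k)`. -/
noncomputable def cost (w : ℕ → ℝ) (n : ℕ) (T : CTree) : ℝ :=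
  ∑ k ∈ Finset.Icc 1 n, w k * T.searchDepth k

/-- `T` is an optimal 2WCST for the instance. -/
noncomputable def OptimalFor (w : ℕ → ℝ) (n : ℕ) (T : CTree) : Prop :=
  ValidFor n T ∧ ∀ T' : CTree, ValidFor n T' → cost w n T ≤ cost w n T'

/-- `w(S)`: total weight of the keys labelling the leaves of a subtree. -/
noncomputable def wt (w : ℕ → ℝ) : CTree → ℝ
  | leaf k => w k
  | eqNode _ y nb => wt w y + wt w nb
  | ltNode _ y nb => wt w y + wt w nb

/-- The side-weight of a node. -/
noncomputable def sw (w : ℕ → ℝ) : CTree → ℝ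
  | leaf _ => 0
  | eqNode k _ _ => w k
  | ltNode _ y nb => min (wt w y) (wt w nb)

/-- `Occurs s T`: `s` occurs as a subtree (node) of `T`. -/
inductive Occurs : CTree → CTree → Prop
  | refl (t : CTree) : Occurs t t
  | eqYes {s k y nb} : Occurs s y → Occurs s (eqNode k y nb)
  | eqNo {s k y nb} : Occurs s nb → Occurs s (eqNode k y nb)
  | ltYes {s k y nb} : Occurs s y → Occurs s (ltNode k y nb)
  | ltNo {s k y nb} : Occurs s nb → Occurs s (ltNode k y nb)

/-- `v` is a child of node `u`. -/
def IsChildOf (v u : CTree) : Prop :=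
  match u with
  | leaf _ => False
  | eqNode _ y nb => v = y ∨ v = nb
  | ltNode _ y nb => v = y ∨ v = nb

/-- The root of the tree is an equal-to test. -/
def RootEq : CTree → Prop
  | eqNode _ _ _ => True
  | _ => False

/-- `ReplaceAt s t T T'`: `T'` is obtained from `T` by replacing one
occurrence of the subtree `s` by `t`, leaving the rest of `T` unchanged. -/
inductive ReplaceAt (s t : CTree) : CTree → CTree → Prop
  | here : ReplaceAt s t s t
  | eqYes {k y y' nb} : ReplaceAt s t y y' → ReplaceAt s t (eqNode k y nb) (eqNode k y' nb)
  | eqNo {k y nb nb'} : ReplaceAt s t nb nb' → ReplaceAt s t (eqNode k y nb) (eqNode k y nb')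
  | ltYes {k y y' nb} : ReplaceAt s t y y' → ReplaceAt s t (ltNode k y nb) (ltNode k y' nb)
  | ltNo {k y nb nb'} : ReplaceAt s t nb nb' → ReplaceAt s t (ltNode k y nb) (ltNode k y nb')

/-- Irreducibility relative to the set `Q` of queries that reach the current subtree:
every branch of every node is traversed by some query. -/
def IrredFrom : Finset ℕ → CTree → Prop
  | _, leaf _ => True
  | Q, eqNode k y nb =>
      (Q.filter (· = k)).Nonempty ∧ (Q.filter (· ≠ k)).Nonempty ∧
      IrredFrom (Q.filter (· = k)) y ∧ IrredFrom (Q.filter (· ≠ k)) nb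
  | Q, ltNode k y nb =>
      (Q.filter (· < k)).Nonempty ∧ (Q.filter (fun q => ¬ q < k)).Nonempty ∧
      IrredFrom (Q.filter (· < k)) y ∧ IrredFrom (Q.filter (fun q => ¬ q < k)) nb

/-- `T` is irreducible: no branch is redundant for the query set `{1, …, n}`. -/
def Irred (n : ℕ) (T : CTree) : Prop := IrredFrom (Finset.Icc 1 n) T

/-- The two kinds of comparison tests. -/
inductive TestKind where
  | eq : TestKind
  | lt : TestKind
deriving DecidableEq

/-- A test node `⟨? k⟩` on key `k` with `=/≥`-branch `hi` and `≠/<`-branch `lo`. -/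
def mkTest : TestKind → ℕ → CTree → CTree → CTree
  | .eq, k, hi, lo => eqNode k hi lo
  | .lt, k, hi, lo => ltNode k lo hi

/-- The `=/≥`-outcome of a test of kind `t` on key `b`, applied to query `q`. -/
def hiOutcome : TestKind → ℕ → ℕ → Prop
  | .eq, b, q => q = b
  | .lt, b, q => b ≤ q

instance (t : TestKind) (b q : ℕ) : Decidable (hiOutcome t b q) :=
  match t with
  | .eq => inferInstanceAs (Decidable (q = b))
  | .lt => inferInstanceAs (Decidable (b ≤ q))

/-- Number of leaves of a tree. -/
def numLeaves : CTree → ℕ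
  | leaf _ => 1
  | eqNode _ y nb => y.numLeaves + nb.numLeaves
  | ltNode _ y nb => y.numLeaves + nb.numLeaves

end CTree

theorem CTree.le_of_hiOutcome {t : TestKind} {b q : ℕ} : hiOutcome t b q → b ≤ q :=
  match t with
  | .eq => fun hqb => hqb.ge
  | .lt => id

open CTree in
theorem rotate_lt_above_test_general
    (n a b : ℕ)
    (t : TestKind) (h : a < b ∨ t = TestKind.eq)
    {D : Type} (X Y Z : D) :
    ∀ q ∈ Finset.Icc 1 n,
      (if hiOutcome t b q then X else (if q < a then Y else Z))
        = (if b < a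
            then (if q < a then (if hiOutcome t b q then X else Y) else Z)
            else (if q < a then Y else (if hiOutcome t b q then X else Z))) := by
  intro q _
  by_cases hba : b < a
  · obtain rfl : t = .eq := h.resolve_left hba.asymm
    rw [if_pos hba, ite_ite_distrib_left]
    exact if_ctx_congr Iff.rfl (fun _ => rfl) fun hqa => if_neg fun hqb : q = b => hqa (hqb ▸ hba)
  · rw [if_neg hba]
    exact ite_ite_comm _ _ X Y fun hhi hqa => hba ((le_of_hiOutcome hhi).trans_lt hqa)

open CTree in
/-- Rotating `⟨< a⟩` above a test node on `b` (Figure (b)): if `a < b` or the test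
on `b` is an equal-to test, then the configuration `⟨? b⟩(X, q < a? (Y, Z))`
routes every query `q ∈ K` to the same destination as the rotated configuration in
which `⟨< a⟩` is the root and the test on `b` is placed on the branch of `⟨< a⟩`
whose range contains `b`. -/
theorem rotate_lt_above_test
    (n a b : ℕ) (ha : a ∈ Finset.Icc 1 n) (hb : b ∈ Finset.Icc 1 n)
    (t : TestKind) (h : a < b ∨ t = TestKind.eq)
    {D : Type} (X Y Z : D) :
    ∀ q ∈ Finset.Icc 1 n,
      (if hiOutcome t b q then X else (if q < a then Y else Z))
        = (if b < a
            then (if q < a then (if hiOutcome t b q then X else Y) else Z)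
            else (if q < a then Y else (if hiOutcome t b q then X else Z))) :=
  rotate_lt_above_test_general n a b t h X Y Z
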